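/- arXiv:1507.02337 — 7 statements merged into one kernel-verified Lean document; each statement's English description precedes it below -/
import Mathlib

section
/- Let A be a topological algebra with an orthogonal basis (e_n). Then each coefficient functional e_n^* is continuous; that is, every orthogonal basis is a Schauder basis. -/
open Filter Topology

/-- `x = Σ_{n} a n • e n` as convergence of ordered partial sums. -/
def HasExpansion {A : Type*} [AddCommMonoid A] [Module ℂ A] [TopologicalSpace A]
    (a : ℕ → ℂ) (e : ℕ → A) (x : A) : Prop :=
  Tendsto (fun N => ∑ n ∈ Finset.range N, a n • e n) atTop (𝓝 x)

/-!
Right multiplication by `e n` kills every term of an expansion `x = Σ aᵢ eᵢ` but the `n`-th,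
so `x * e n = aₙ • e n`. Uniqueness of expansions forces `e n ≠ 0`, and on the line `ℂ • e n`
of a Hausdorff topological vector space the coordinate is continuous; hence `x ↦ aₙ` is the
continuous map `x ↦ x * e n` read in that coordinate.
-/

section AddCommMonoid

variable {A : Type*} [AddCommMonoid A] [Module ℂ A] [TopologicalSpace A] {e : ℕ → A}

theorem hasExpansion_single_zero_of_eq_zero {n : ℕ} (h : e n = 0) :
    HasExpansion (Pi.single n 1) e 0 := by
  have hsum : ∀ N, ∑ i ∈ Finset.range N, (Pi.single n 1 : ℕ → ℂ) i • e i = 0 := fun N =>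
    Finset.sum_eq_zero fun i _ => by
      rcases eq_or_ne i n with rfl | hi
      · rw [h, smul_zero]
      · rw [Pi.single_eq_of_ne hi, zero_smul]
  simpa only [HasExpansion, hsum] using tendsto_const_nhds

theorem hasExpansion_zero : HasExpansion 0 e 0 := by
  simpa only [HasExpansion, Pi.zero_apply, zero_smul, Finset.sum_const_zero]
    using tendsto_const_nhds

theorem ne_zero_of_hasExpansion_unique {coef : A → ℕ → ℂ}
    (huniq : ∀ x a, HasExpansion a e x → a = coef x) (n : ℕ) : e n ≠ 0 := by
  intro h
  have hsingle : (Pi.single n 1 : ℕ → ℂ) = 0 :=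
    (huniq 0 _ (hasExpansion_single_zero_of_eq_zero h)).trans (huniq 0 0 hasExpansion_zero).symm
  simpa using congrFun hsingle n

end AddCommMonoid

theorem HasExpansion.mul_orthogonal_eq_smul {A : Type*} [NonUnitalRing A] [Module ℂ A]
    [IsScalarTower ℂ A A] [TopologicalSpace A] [T2Space A] {e : ℕ → A}
    (horth : ∀ i j, e i * e j = if i = j then e i else 0) {a : ℕ → ℂ} {x : A}
    (hx : HasExpansion a e x) {n : ℕ} (hcont : Continuous fun y => y * e n) :
    x * e n = a n • e n := by
  have hlim : Tendsto (fun N => (∑ i ∈ Finset.range N, a i • e i) * e n) atTop (𝓝 (x * e n)) :=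
    (hcont.tendsto x).comp hx
  have hpartial : ∀ N, n < N → (∑ i ∈ Finset.range N, a i • e i) * e n = a n • e n := by
    intro N hN
    rw [Finset.sum_mul, Finset.sum_eq_single_of_mem n (Finset.mem_range.2 hN)]
    · rw [smul_mul_assoc, horth, if_pos rfl]
    · intro i _ hin
      rw [smul_mul_assoc, horth, if_neg hin, smul_zero]
  refine tendsto_nhds_unique hlim (tendsto_const_nhds.congr' ?_)
  filter_upwards [eventually_gt_atTop n] with N hN
  exact (hpartial N hN).symm

theorem stmt1_general {A : Type*} [NonUnitalRing A] [Module ℂ A]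
    [IsScalarTower ℂ A A] [TopologicalSpace A] [T2Space A] [IsTopologicalAddGroup A]
    [ContinuousSMul ℂ A]
    (hmul : ∀ y : A, Continuous (fun x => x * y) ∧ Continuous (fun x => y * x))
    (e : ℕ → A) (coef : A → ℕ → ℂ)
    (horth : ∀ i j, e i * e j = if i = j then e i else 0)
    (hbasis : ∀ x, HasExpansion (coef x) e x)
    (huniq : ∀ x a, HasExpansion a e x → a = coef x) :
    ∀ n : ℕ, Continuous (fun x => coef x n) := by
  intro n
  have hcoord : (fun c : ℂ => c • e n) ∘ (fun x => coef x n) = fun x => x * e n :=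
    funext fun x => ((hbasis x).mul_orthogonal_eq_smul horth (hmul (e n)).1).symm
  refine (isClosedEmbedding_smul_left (ne_zero_of_hasExpansion_unique huniq n)).continuous_iff.2 ?_
  exact hcoord ▸ (hmul (e n)).1

/-- Every orthogonal basis of a topological algebra is a Schauder basis. -/
theorem stmt1 {A : Type*} [NonUnitalRing A] [Module ℂ A] [SMulCommClass ℂ A A]
    [IsScalarTower ℂ A A] [TopologicalSpace A] [T2Space A] [IsTopologicalAddGroup A]
    [ContinuousSMul ℂ A]
    (hmul : ∀ y : A, Continuous (fun x => x * y) ∧ Continuous (fun x => y * x))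
    (e : ℕ → A) (coef : A → ℕ → ℂ)
    (horth : ∀ i j, e i * e j = if i = j then e i else 0)
    (hbasis : ∀ x, HasExpansion (coef x) e x)
    (huniq : ∀ x a, HasExpansion a e x → a = coef x) :
    ∀ n : ℕ, Continuous (fun x => coef x n) :=
  stmt1_general hmul e coef horth hbasis huniq
end

section
/- Let A be a topological algebra with an orthogonal basis (e_n), and let f be a multiplicative linear functional on A. If f(e_{n_0}) ≠ 0 for some n_0, then f = e_{n_0}^*, the n_0-th coefficient functional. -/
open Filter Topology

section OrthogonalBasis

variable {A : Type*} [NonUnitalNonAssocSemiring A] [Module ℂ A] [IsScalarTower ℂ A A]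
  {e : ℕ → A}

theorem sum_smul_mul_of_orthogonal (horth : ∀ i j, e i * e j = if i = j then e i else 0)
    (a : ℕ → ℂ) {k N : ℕ} (hkN : k < N) :
    (∑ n ∈ Finset.range N, a n • e n) * e k = a k • e k := by
  simp_rw [Finset.sum_mul, smul_mul_assoc, horth, smul_ite, smul_zero]
  rw [Finset.sum_ite_eq' (Finset.range N) k, if_pos (Finset.mem_range.2 hkN)]

theorem HasExpansion.mul_basis [TopologicalSpace A] [T2Space A]
    (horth : ∀ i j, e i * e j = if i = j then e i else 0) {a : ℕ → ℂ} {x : A}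
    (hx : HasExpansion a e x) (k : ℕ) (hk : Continuous fun y => y * e k) :
    x * e k = a k • e k := by
  refine tendsto_nhds_unique ((hk.tendsto x).comp hx) (tendsto_const_nhds.congr' ?_)
  filter_upwards [eventually_gt_atTop k] with N hN
  exact (sum_smul_mul_of_orthogonal horth a hN).symm

end OrthogonalBasis

theorem eq_of_map_mul_eq_smul {𝕜 A : Type*} [Field 𝕜] [AddCommMonoid A] [Mul A] [Module 𝕜 A]
    {f : A → 𝕜} (hf : IsLinearMap 𝕜 f) (hfm : ∀ x y, f (x * y) = f x * f y) {x u : A} {c : 𝕜}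
    (hxu : x * u = c • u) (hu : f u ≠ 0) : f x = c := by
  have hfxu := hfm x u
  rw [hxu, hf.map_smul, smul_eq_mul] at hfxu
  exact mul_right_cancel₀ hu hfxu.symm

theorem stmt2_general {A : Type*} [NonUnitalRing A] [Module ℂ A]
    [IsScalarTower ℂ A A] [TopologicalSpace A] [T2Space A]
    (hmul : ∀ y : A, Continuous (fun x => x * y) ∧ Continuous (fun x => y * x))
    (e : ℕ → A) (coef : A → ℕ → ℂ)
    (horth : ∀ i j, e i * e j = if i = j then e i else 0)
    (hbasis : ∀ x, HasExpansion (coef x) e x)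
    (f : A → ℂ) (hf : IsLinearMap ℂ f) (hfm : ∀ x y, f (x * y) = f x * f y)
    (n₀ : ℕ) (h : f (e n₀) ≠ 0) :
    ∀ x, f x = coef x n₀ := fun x =>
  eq_of_map_mul_eq_smul hf hfm ((hbasis x).mul_basis horth n₀ (hmul (e n₀)).1) h

/-- If a multiplicative linear functional is nonzero on some basis vector, it is the
corresponding coefficient functional. -/
theorem stmt2 {A : Type*} [NonUnitalRing A] [Module ℂ A] [SMulCommClass ℂ A A]
    [IsScalarTower ℂ A A] [TopologicalSpace A] [T2Space A] [IsTopologicalAddGroup A]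
    [ContinuousSMul ℂ A]
    (hmul : ∀ y : A, Continuous (fun x => x * y) ∧ Continuous (fun x => y * x))
    (e : ℕ → A) (coef : A → ℕ → ℂ)
    (horth : ∀ i j, e i * e j = if i = j then e i else 0)
    (hbasis : ∀ x, HasExpansion (coef x) e x)
    (huniq : ∀ x a, HasExpansion a e x → a = coef x)
    (f : A → ℂ) (hf : IsLinearMap ℂ f) (hfm : ∀ x y, f (x * y) = f x * f y)
    (n₀ : ℕ) (h : f (e n₀) ≠ 0) :
    ∀ x, f x = coef x n₀ :=
  stmt2_general hmul e coef horth hbasis f hf hfm n₀ h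
end

section
/- Let A be a topological algebra with an orthogonal basis (e_n). Then the set of nonzero continuous multiplicative linear functionals on A is exactly {e_n^* : n ≥ 1}. -/
open Filter Topology

/-!
Multiplying the expansion of `x` by `e n` kills every term but one, so `x * e n = e_n^*(x) • e n`.
This makes `e_n^*` multiplicative, and continuous because `c ↦ c • e n` is a closed embedding
of `ℂ`. Conversely, a character `f` takes idempotent values `f (e k) ∈ {0, 1}`, with
`f (e k) * f (e n) = f (e k * e n) = 0` for `k ≠ n`, so at most one of them is `1`; by continuity
`f x = Σ e_k^*(x) * f (e k)`, so one of them is `1` as `f ≠ 0`, and then `f = e_n^*`.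
-/

namespace HasExpansion

variable {A : Type*} [AddCommMonoid A] [Module ℂ A] [TopologicalSpace A] {e : ℕ → A}
  {a b : ℕ → ℂ} {x y : A}

theorem single (e : ℕ → A) (n : ℕ) (c : ℂ) : HasExpansion (Pi.single n c) e (c • e n) := by
  have hsum : HasSum (fun k => (Pi.single n c : ℕ → ℂ) k • e k)
      ((Pi.single n c : ℕ → ℂ) n • e n) :=
    hasSum_single n fun k hk => by rw [Pi.single_eq_of_ne hk, zero_smul]
  rw [Pi.single_eq_same] at hsum
  exact hsum.tendsto_sum_nat

theorem zero (e : ℕ → A) : HasExpansion 0 e 0 := by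
  simpa using single e 0 0

theorem add [ContinuousAdd A] (ha : HasExpansion a e x) (hb : HasExpansion b e y) :
    HasExpansion (a + b) e (x + y) := by
  simpa only [HasExpansion, Pi.add_apply, add_smul, Finset.sum_add_distrib] using Tendsto.add ha hb

theorem const_smul [ContinuousConstSMul ℂ A] (c : ℂ) (ha : HasExpansion a e x) :
    HasExpansion (c • a) e (c • x) := by
  simpa only [HasExpansion, Pi.smul_apply, smul_eq_mul, mul_smul, Finset.smul_sum]
    using Tendsto.const_smul ha c

end HasExpansion

section Coefficients

variable {A : Type*} [AddCommMonoid A] [Module ℂ A] [TopologicalSpace A] {e : ℕ → A}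
  {coef : A → ℕ → ℂ}

theorem coef_zero (huniq : ∀ x a, HasExpansion a e x → a = coef x) : coef 0 = 0 :=
  (huniq 0 0 (HasExpansion.zero e)).symm

theorem coef_basis (huniq : ∀ x a, HasExpansion a e x → a = coef x) (n : ℕ) :
    coef (e n) = Pi.single n 1 :=
  (huniq _ _ (by simpa using HasExpansion.single e n 1)).symm

theorem basis_ne_zero (huniq : ∀ x a, HasExpansion a e x → a = coef x) (n : ℕ) : e n ≠ 0 := by
  intro h
  have := congrFun (coef_basis huniq n) n
  simp [h, coef_zero huniq] at this

theorem isLinearMap_coef [ContinuousAdd A] [ContinuousConstSMul ℂ A]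
    (hbasis : ∀ x, HasExpansion (coef x) e x)
    (huniq : ∀ x a, HasExpansion a e x → a = coef x) (n : ℕ) :
    IsLinearMap ℂ fun x => coef x n where
  map_add x y := congrFun (huniq _ _ ((hbasis x).add (hbasis y))).symm n
  map_smul c x := congrFun (huniq _ _ ((hbasis x).const_smul c)).symm n

end Coefficients

section Multiplication

variable {A : Type*} [TopologicalSpace A] {e : ℕ → A} {coef : A → ℕ → ℂ}

theorem mul_basis_eq_coef_smul [NonUnitalNonAssocSemiring A] [Module ℂ A] [IsScalarTower ℂ A A]
    [T2Space A] (horth : ∀ i j, e i * e j = if i = j then e i else 0)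
    (hbasis : ∀ x, HasExpansion (coef x) e x) {n : ℕ} (hcont : Continuous fun x => x * e n)
    (x : A) : x * e n = coef x n • e n := by
  have hsum : HasSum (fun k => coef x k • e k * e n) (coef x n • e n * e n) :=
    hasSum_single n fun k hk => by rw [smul_mul_assoc, horth, if_neg hk, smul_zero]
  rw [smul_mul_assoc, horth, if_pos rfl] at hsum
  refine tendsto_nhds_unique ((hcont.tendsto x).comp (hbasis x)) ?_
  simpa only [Function.comp_def, Finset.sum_mul] using hsum.tendsto_sum_nat

theorem coef_mul [NonUnitalRing A] [Module ℂ A] [SMulCommClass ℂ A A] [IsScalarTower ℂ A A]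
    [T2Space A] (horth : ∀ i j, e i * e j = if i = j then e i else 0)
    (hbasis : ∀ x, HasExpansion (coef x) e x)
    (huniq : ∀ x a, HasExpansion a e x → a = coef x) {n : ℕ}
    (hcont : Continuous fun x => x * e n) (x y : A) :
    coef (x * y) n = coef x n * coef y n := by
  have hmul := mul_basis_eq_coef_smul horth hbasis hcont
  apply smul_left_injective ℂ (basis_ne_zero huniq n)
  dsimp only
  rw [← hmul, mul_assoc, hmul y, mul_smul_comm, hmul x, smul_smul, mul_comm]

theorem continuous_coef [NonUnitalNonAssocRing A] [Module ℂ A] [IsScalarTower ℂ A A] [T2Space A]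
    [IsTopologicalAddGroup A] [ContinuousSMul ℂ A]
    (horth : ∀ i j, e i * e j = if i = j then e i else 0)
    (hbasis : ∀ x, HasExpansion (coef x) e x)
    (huniq : ∀ x a, HasExpansion a e x → a = coef x) {n : ℕ}
    (hcont : Continuous fun x => x * e n) : Continuous fun x => coef x n := by
  refine (isClosedEmbedding_smul_left (basis_ne_zero huniq n)).isEmbedding.continuous_iff.2 ?_
  simpa only [Function.comp_def, ← mul_basis_eq_coef_smul horth hbasis hcont] using hcont

end Multiplication

section Characters

variable {A : Type*} [NonUnitalNonAssocSemiring A] [Module ℂ A] [TopologicalSpace A]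
  {e : ℕ → A} {coef : A → ℕ → ℂ} {f : A →ₗ[ℂ] ℂ}

theorem apply_eq_coef_mul_apply_basis (hf : Continuous f)
    (hbasis : ∀ x, HasExpansion (coef x) e x) {n : ℕ} (hvanish : ∀ k ≠ n, f (e k) = 0)
    (x : A) : f x = coef x n * f (e n) := by
  have hsum : HasSum (fun k => coef x k * f (e k)) (coef x n * f (e n)) :=
    hasSum_single n fun k hk => by rw [hvanish k hk, mul_zero]
  refine tendsto_nhds_unique ?_ hsum.tendsto_sum_nat
  simpa only [Function.comp_def, map_sum, map_smul, smul_eq_mul]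
    using (hf.tendsto x).comp (hbasis x)

theorem exists_eq_coef_of_map_mul (hf : Continuous f) (hf0 : f ≠ 0)
    (hfmul : ∀ x y, f (x * y) = f x * f y)
    (horth : ∀ i j, e i * e j = if i = j then e i else 0)
    (hbasis : ∀ x, HasExpansion (coef x) e x) : ∃ n, ⇑f = fun x => coef x n := by
  obtain ⟨n, hn⟩ : ∃ n, f (e n) ≠ 0 := by
    by_contra! h
    refine hf0 (LinearMap.ext fun x => ?_)
    simpa [h] using apply_eq_coef_mul_apply_basis hf hbasis (n := 0) (fun k _ => h k) x
  have hn1 : f (e n) = 1 := by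
    refine (IsIdempotentElem.iff_eq_zero_or_one.1 ?_).resolve_left hn
    rw [IsIdempotentElem, ← hfmul, horth, if_pos rfl]
  have hvanish : ∀ k ≠ n, f (e k) = 0 := fun k hk => by
    simpa [horth, hk, hn1] using (hfmul (e k) (e n)).symm
  refine ⟨n, funext fun x => ?_⟩
  rw [apply_eq_coef_mul_apply_basis hf hbasis hvanish, hn1, mul_one]

end Characters

/-- The nonzero continuous multiplicative linear functionals are exactly the coefficient
functionals of the orthogonal basis. -/
theorem stmt3 {A : Type*} [NonUnitalRing A] [Module ℂ A] [SMulCommClass ℂ A A]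
    [IsScalarTower ℂ A A] [TopologicalSpace A] [T2Space A] [IsTopologicalAddGroup A]
    [ContinuousSMul ℂ A]
    (hmul : ∀ y : A, Continuous (fun x => x * y) ∧ Continuous (fun x => y * x))
    (e : ℕ → A) (coef : A → ℕ → ℂ)
    (horth : ∀ i j, e i * e j = if i = j then e i else 0)
    (hbasis : ∀ x, HasExpansion (coef x) e x)
    (huniq : ∀ x a, HasExpansion a e x → a = coef x) :
    ∀ f : A → ℂ,
      (IsLinearMap ℂ f ∧ (∀ x y, f (x * y) = f x * f y) ∧ f ≠ 0 ∧ Continuous f) ↔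
        ∃ n, f = fun x => coef x n := by
  intro f
  constructor
  · rintro ⟨hlin, hfmul, hf0, hf⟩
    exact exists_eq_coef_of_map_mul (f := hlin.mk' f) hf
      (fun h => hf0 (congrArg DFunLike.coe h)) hfmul horth hbasis
  · rintro ⟨n, rfl⟩
    refine ⟨isLinearMap_coef hbasis huniq n, coef_mul horth hbasis huniq (hmul (e n)).1,
      fun h => ?_, continuous_coef horth hbasis huniq (hmul (e n)).1⟩
    simpa [coef_basis huniq n] using congrFun h (e n)
end

section
/- Let (A, (‖·‖_i)_{i≥1}) be a unital B_0-algebra with an orthogonal basis (e_n). Then there exists x ∈ A such that the sequence (e_n^*(x))_{n≥1} of coefficients of x is unbounded. -/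
open Filter Topology

namespace WithSeminorms

variable {𝕜 E ι : Type*} [NormedField 𝕜] [AddCommGroup E] [Module 𝕜 E]

theorem summable_of_summable_seminorm [UniformSpace E] [IsUniformAddGroup E] [CompleteSpace E]
    {p : SeminormFamily 𝕜 E ι} (hp : WithSeminorms p) {β : Type*} {f : β → E}
    (hf : ∀ i, Summable fun b => p i (f b)) : Summable f := by
  refine summable_iff_vanishing.2 fun U hU => ?_
  obtain ⟨s, r, hr, hball⟩ := (hp.mem_nhds_iff 0 U).1 hU
  obtain ⟨t₀, ht₀⟩ := summable_iff_vanishing_norm.1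
    (summable_sum fun i (_ : i ∈ s) => hf i) r hr
  refine ⟨t₀, fun t ht => hball ?_⟩
  rw [Seminorm.mem_ball_zero]
  calc s.sup p (∑ b ∈ t, f b) ≤ ∑ i ∈ s, p i (∑ b ∈ t, f b) :=
        (Seminorm.finset_sup_le_sum p s _).trans_eq (sum_apply s p _)
    _ ≤ ∑ i ∈ s, ∑ b ∈ t, p i (f b) := Finset.sum_le_sum fun i _ =>
        Finset.le_sum_of_subadditive (p i) (map_zero _).le (map_add_le_add _) t f
    _ = ∑ b ∈ t, ∑ i ∈ s, p i (f b) := Finset.sum_comm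
    _ ≤ ‖∑ b ∈ t, ∑ i ∈ s, p i (f b)‖ := Real.le_norm_self _
    _ < r := ht₀ t ht

theorem continuous_mul_left {A : Type*} [Ring A] [Algebra 𝕜 A] [TopologicalSpace A]
    {p : ℕ → Seminorm 𝕜 A} (hp : WithSeminorms p)
    (hsub : ∀ i x y, p i (x * y) ≤ p (i + 1) x * p (i + 1) y) (a : A) :
    Continuous (a * ·) :=
  hp.continuous_of_isBounded hp (LinearMap.mulLeft 𝕜 a) <| Seminorm.IsBounded.of_real fun i =>
    ⟨{i + 1}, p (i + 1) a, fun x => by simpa using hsub i a x⟩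

end WithSeminorms

namespace HasExpansion

variable {A : Type*} {a : ℕ → ℂ} {e : ℕ → A} {x : A}

theorem tendsto_smul_zero [AddCommGroup A] [Module ℂ A] [TopologicalSpace A]
    [IsTopologicalAddGroup A] (h : HasExpansion a e x) :
    Tendsto (fun n => a n • e n) atTop (𝓝 0) := by
  have := (h.comp (tendsto_add_atTop_nat 1)).sub h
  simpa [Function.comp_def, Finset.sum_range_succ] using this

theorem mul_left_eq [Ring A] [Algebra ℂ A] [TopologicalSpace A] [T2Space A]
    (horth : ∀ i j, e i * e j = if i = j then e i else 0) (h : HasExpansion a e x) (k : ℕ)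
    (hcont : Continuous (e k * ·)) : e k * x = a k • e k := by
  have hpartial : ∀ N, k < N → e k * ∑ n ∈ Finset.range N, a n • e n = a k • e k := by
    intro N hkN
    simp_rw [Finset.mul_sum, mul_smul_comm, horth, smul_ite, smul_zero]
    simp [Finset.mem_range.2 hkN]
  refine tendsto_nhds_unique ((hcont.tendsto x).comp h) (tendsto_const_nhds.congr' ?_)
  filter_upwards [eventually_gt_atTop k] with N hN
  exact (hpartial N hN).symm

theorem of_hasSum_comp [AddCommMonoid A] [Module ℂ A] [TopologicalSpace A] {φ : ℕ → ℕ}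
    (hφ : Function.Injective φ) {b : ℕ → ℂ} (h : HasSum (fun k => b k • e (φ k)) x) :
    HasExpansion (Function.extend φ b 0) e x := by
  refine HasSum.tendsto_sum_nat ((hφ.hasSum_iff fun n hn => ?_).1 ?_)
  · simp [Function.extend_apply' _ _ _ hn]
  · simpa [Function.comp_def, hφ.extend_apply] using h

end HasExpansion

theorem WithSeminorms.exists_strictMono_summable_natCast_smul {E : Type*} [AddCommGroup E]
    [Module ℂ E] [UniformSpace E] [IsUniformAddGroup E] [CompleteSpace E]
    {p : ℕ → Seminorm ℂ E} (hp : WithSeminorms p) (hmono : Monotone p) {u : ℕ → E}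
    (hu : Tendsto u atTop (𝓝 0)) :
    ∃ φ : ℕ → ℕ, StrictMono φ ∧ Summable fun k : ℕ => (k : ℂ) • u (φ k) := by
  have := hp.continuousSMul
  have hsmall : ∀ k, ∀ᶠ m in atTop, p k ((k : ℂ) • u m) < (1 / 2) ^ k := fun k => by
    have hk : Tendsto (fun m => (k : ℂ) • u m) atTop (𝓝 0) := by
      simpa only [smul_zero] using hu.const_smul (k : ℂ)
    simpa using (hp.tendsto_nhds _ 0).1 hk k ((1 / 2) ^ k) (by positivity)
  obtain ⟨φ, hφ, hφsmall⟩ := extraction_forall_of_eventually hsmall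
  refine ⟨φ, hφ, hp.summable_of_summable_seminorm fun i =>
    summable_geometric_two.of_norm_bounded_eventually_nat ?_⟩
  filter_upwards [eventually_ge_atTop i] with k hik
  rw [Real.norm_of_nonneg (apply_nonneg _ _)]
  exact (hmono hik _).trans (hφsmall k).le

theorem stmt5_general {A : Type*} [Ring A] [Algebra ℂ A] [UniformSpace A] [T2Space A]
    [IsUniformAddGroup A] [CompleteSpace A]
    (p : ℕ → Seminorm ℂ A) (hp : WithSeminorms p)
    (hmono : ∀ i x, p i x ≤ p (i + 1) x)
    (hsub : ∀ i x y, p i (x * y) ≤ p (i + 1) x * p (i + 1) y)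
    (e : ℕ → A) (coef : A → ℕ → ℂ)
    (horth : ∀ i j, e i * e j = if i = j then e i else 0)
    (hbasis : ∀ x, HasExpansion (coef x) e x)
    (huniq : ∀ x a, HasExpansion a e x → a = coef x) :
    ∃ x : A, ¬ ∃ M : ℝ, ∀ n, ‖coef x n‖ ≤ M := by
  have he : Tendsto e atTop (𝓝 0) := by
    have hunit : ∀ n, e n = coef 1 n • e n := fun n => by
      rw [← (hbasis 1).mul_left_eq horth n (hp.continuous_mul_left hsub (e n)), mul_one]
    simpa only [← hunit] using (hbasis 1).tendsto_smul_zero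
  obtain ⟨φ, hφ, hsum⟩ := hp.exists_strictMono_summable_natCast_smul
    (monotone_nat_of_le_succ fun i x => hmono i x) he
  obtain ⟨x, hx⟩ := hsum
  have hcoef := huniq x _ (HasExpansion.of_hasSum_comp hφ.injective hx)
  refine ⟨x, fun ⟨M, hM⟩ => ?_⟩
  obtain ⟨k, hk⟩ := exists_nat_gt M
  have := hM (φ k)
  rw [← hcoef, hφ.injective.extend_apply, Complex.norm_natCast] at this
  linarith

/-- In a unital B₀-algebra with orthogonal basis, some element has unbounded coefficients. -/
theorem stmt5 {A : Type*} [Ring A] [Algebra ℂ A] [UniformSpace A] [T2Space A]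
    [IsUniformAddGroup A] [ContinuousSMul ℂ A] [CompleteSpace A]
    (p : ℕ → Seminorm ℂ A) (hp : WithSeminorms p)
    (hmono : ∀ i x, p i x ≤ p (i + 1) x)
    (hsub : ∀ i x y, p i (x * y) ≤ p (i + 1) x * p (i + 1) y)
    (e : ℕ → A) (coef : A → ℕ → ℂ)
    (horth : ∀ i j, e i * e j = if i = j then e i else 0)
    (hbasis : ∀ x, HasExpansion (coef x) e x)
    (huniq : ∀ x a, HasExpansion a e x → a = coef x) :
    ∃ x : A, ¬ ∃ M : ℝ, ∀ n, ‖coef x n‖ ≤ M :=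
  stmt5_general p hp hmono hsub e coef horth hbasis huniq
end

section
/- Let (A, (‖·‖_i)) be a unital B_0-algebra with an orthogonal basis (e_n). If (t_n)_{n≥n_0} is a complex sequence with Σ_{n=n_0}^∞ |t_n − t_{n+1}| < ∞, then the series Σ_{n=n_0}^∞ t_n e_n converges in A. -/
/-!
Since left multiplication by `eₖ` is continuous and the basis is orthogonal, multiplying the
expansion of `1` by `eₖ` shows that its coefficients are all `1`, so the partial sums
`Eₙ = e₀ + ⋯ + eₙ₋₁` converge to `1` and are in particular bounded. Summation by parts writes
`Σ_{n<N} tₙ eₙ` as `t_N E_N + Σ_{n<N} (tₙ - tₙ₊₁) Eₙ₊₁`: the first term converges because `t` does,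
and the second because an absolutely summable scalar series against a bounded sequence is
summable in a complete locally convex space.
-/

open Filter Topology

open Finset Bornology

theorem Finset.sum_range_smul_eq_smul_sum_add_sum_sub_smul {R M : Type*} [Ring R]
    [AddCommGroup M] [Module R M] (t : ℕ → R) (e : ℕ → M) (N : ℕ) :
    ∑ n ∈ range N, t n • e n =
      t N • ∑ n ∈ range N, e n + ∑ n ∈ range N, (t n - t (n + 1)) • ∑ k ∈ range (n + 1), e k := by
  induction N with
  | zero => simp
  | succ N ih =>
    rw [sum_range_succ, ih, sum_range_succ (fun n => (t n - t (n + 1)) • _), sum_range_succ e]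
    simp only [sub_smul, smul_add]
    abel

namespace WithSeminorms

variable {ι 𝕜 E : Type*} [NontriviallyNormedField 𝕜] [AddCommGroup E] [Module 𝕜 E]
  [UniformSpace E] [IsUniformAddGroup E] [CompleteSpace E] {p : SeminormFamily 𝕜 E ι}

theorem summable_smul_of_summable_norm {β : Type*} (hp : WithSeminorms p) {c : β → 𝕜}
    (hc : Summable fun n => ‖c n‖) {x : β → E} (hx : IsVonNBounded 𝕜 (Set.range x)) :
    Summable fun n => c n • x n := by
  refine summable_iff_vanishing.2 fun V hV => ?_
  obtain ⟨⟨I, ε⟩, hε, hIε⟩ := hp.hasBasis_zero_ball.mem_iff.1 hV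
  obtain ⟨r, hr, hxr⟩ := hp.isVonNBounded_iff_finset_seminorm_bounded.1 hx I
  obtain ⟨s, hs⟩ := summable_iff_vanishing_norm.1 hc (ε / r) (div_pos hε hr)
  refine ⟨s, fun u hu => hIε ?_⟩
  have hcu : ∑ n ∈ u, ‖c n‖ < ε / r := by
    simpa only [Real.norm_of_nonneg (sum_nonneg fun n _ => norm_nonneg (c n))] using hs u hu
  rw [Seminorm.mem_ball_zero]
  calc I.sup p (∑ n ∈ u, c n • x n) ≤ ∑ n ∈ u, ‖c n‖ * I.sup p (x n) :=
        (le_sum_of_subadditive _ (map_zero _).le (map_add_le_add _) _ _).trans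
          (sum_le_sum fun n _ => (map_smul_eq_mul _ _ _).le)
    _ ≤ (∑ n ∈ u, ‖c n‖) * r := by
        rw [sum_mul]
        exact sum_le_sum fun n _ => by gcongr; exact (hxr _ ⟨n, rfl⟩).le
    _ < ε := (lt_div_iff₀ hr).1 hcu

theorem exists_tendsto_sum_smul_of_summable_norm_sub [CompleteSpace 𝕜] [ContinuousSMul 𝕜 E]
    (hp : WithSeminorms p) {e : ℕ → E} {s : E}
    (he : Tendsto (fun N => ∑ n ∈ range N, e n) atTop (𝓝 s)) {t : ℕ → 𝕜}
    (ht : Summable fun n => ‖t n - t (n + 1)‖) :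
    ∃ y, Tendsto (fun N => ∑ n ∈ range N, t n • e n) atTop (𝓝 y) := by
  obtain ⟨τ, hτ⟩ : ∃ τ, Tendsto t atTop (𝓝 τ) :=
    cauchySeq_tendsto_of_complete <| cauchySeq_of_summable_dist <| by
      simpa only [dist_eq_norm] using ht
  have hsum := hp.summable_smul_of_summable_norm ht
    ((he.comp (tendsto_add_atTop_nat 1)).isVonNBounded_range 𝕜)
  refine ⟨τ • s + ∑' n, (t n - t (n + 1)) • ∑ k ∈ range (n + 1), e k, ?_⟩
  simp_rw [sum_range_smul_eq_smul_sum_add_sum_sub_smul t e]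
  exact (hτ.smul he).add hsum.hasSum.tendsto_sum_nat

end WithSeminorms

theorem WithSeminorms.continuous_mul_left_of_seminorm_mul_le {𝕜 A : Type*} [NormedField 𝕜]
    [Ring A] [Algebra 𝕜 A] [TopologicalSpace A] {p : ℕ → Seminorm 𝕜 A} (hp : WithSeminorms p)
    (hmul : ∀ i x y, p i (x * y) ≤ p (i + 1) x * p (i + 1) y) (a : A) :
    Continuous (a * ·) :=
  hp.continuous_of_isBounded hp (LinearMap.mulLeft 𝕜 a) <| Seminorm.IsBounded.of_real fun i =>
    ⟨{i + 1}, p (i + 1) a, fun x => by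
      simpa only [sup_singleton, LinearMap.mulLeft_apply] using hmul i a x⟩

section OrthogonalBasis

variable {A : Type*} [Ring A] [Algebra ℂ A] [TopologicalSpace A] [T2Space A] {e : ℕ → A}

theorem HasExpansion.mul_left_eq_smul (horth : ∀ i j, e i * e j = if i = j then e i else 0)
    {a : ℕ → ℂ} {x : A} (hx : HasExpansion a e x) {j : ℕ} (hj : Continuous (e j * ·)) :
    e j * x = a j • e j := by
  have hpartial : ∀ N, j < N → e j * ∑ n ∈ range N, a n • e n = a j • e j := fun N hN => by
    simp only [mul_sum, mul_smul_comm, horth, smul_ite, smul_zero, sum_ite_eq, mem_range, hN,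
      if_true]
  refine tendsto_nhds_unique ((hj.tendsto x).comp hx) (tendsto_const_nhds.congr' ?_)
  filter_upwards [eventually_gt_atTop j] with N hN
  exact (hpartial N hN).symm

theorem tendsto_sum_range_nhds_one (horth : ∀ i j, e i * e j = if i = j then e i else 0)
    {a : ℕ → ℂ} (h₁ : HasExpansion a e 1) (hcont : ∀ j, Continuous (e j * ·)) :
    Tendsto (fun N => ∑ n ∈ range N, e n) atTop (𝓝 1) :=
  h₁.congr fun N => sum_congr rfl fun j _ => by
    rw [← h₁.mul_left_eq_smul horth (hcont j), mul_one]

end OrthogonalBasis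

theorem stmt10_general {A : Type*} [Ring A] [Algebra ℂ A] [UniformSpace A] [T2Space A]
    [IsUniformAddGroup A] [ContinuousSMul ℂ A] [CompleteSpace A]
    (p : ℕ → Seminorm ℂ A) (hp : WithSeminorms p)
    (hsub : ∀ i x y, p i (x * y) ≤ p (i + 1) x * p (i + 1) y)
    (e : ℕ → A) (coef : A → ℕ → ℂ)
    (horth : ∀ i j, e i * e j = if i = j then e i else 0)
    (hbasis : ∀ x, HasExpansion (coef x) e x)
    (n₀ : ℕ) (t : ℕ → ℂ)
    (h : Summable fun n => ‖t (n₀ + n) - t (n₀ + n + 1)‖) :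
    ∃ y : A, Tendsto (fun N => ∑ n ∈ Finset.Ico n₀ N, t n • e n) atTop (𝓝 y) := by
  have hunit := tendsto_sum_range_nhds_one horth (hbasis 1)
    fun j => hp.continuous_mul_left_of_seminorm_mul_le hsub (e j)
  have htail : Tendsto (fun N => ∑ n ∈ range N, e (n₀ + n)) atTop
      (𝓝 (1 - ∑ n ∈ range n₀, e n)) :=
    ((hunit.comp (tendsto_add_atTop_nat n₀)).sub_const _).congr fun N => by
      simp only [Function.comp_apply, add_comm N n₀, sum_range_add, add_sub_cancel_left]
  obtain ⟨y, hy⟩ := hp.exists_tendsto_sum_smul_of_summable_norm_sub htail h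
  exact ⟨y, (hy.comp (tendsto_sub_atTop_nat n₀)).congr fun N => (sum_Ico_eq_sum_range _ _ _).symm⟩

/-- In a unital B₀-algebra with orthogonal basis, Σ tₙ eₙ converges whenever
Σ |tₙ − tₙ₊₁| < ∞. -/
theorem stmt10 {A : Type*} [Ring A] [Algebra ℂ A] [UniformSpace A] [T2Space A]
    [IsUniformAddGroup A] [ContinuousSMul ℂ A] [CompleteSpace A]
    (p : ℕ → Seminorm ℂ A) (hp : WithSeminorms p)
    (hmono : ∀ i x, p i x ≤ p (i + 1) x)
    (hsub : ∀ i x y, p i (x * y) ≤ p (i + 1) x * p (i + 1) y)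
    (e : ℕ → A) (coef : A → ℕ → ℂ)
    (horth : ∀ i j, e i * e j = if i = j then e i else 0)
    (hbasis : ∀ x, HasExpansion (coef x) e x)
    (huniq : ∀ x a, HasExpansion a e x → a = coef x)
    (n₀ : ℕ) (t : ℕ → ℂ)
    (h : Summable fun n => ‖t (n₀ + n) - t (n₀ + n + 1)‖) :
    ∃ y : A, Tendsto (fun N => ∑ n ∈ Finset.Ico n₀ N, t n • e n) atTop (𝓝 y) :=
  stmt10_general p hp hsub e coef horth hbasis n₀ t h
end

section
/- Let A be a unital B_0-algebra with an orthogonal basis (e_n) and let f be a multiplicative linear functional on A that is not continuous (equivalently, f ≠ e_n^* for all n). Then f(e_n) = 0 for all n. -/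
open Filter Topology

/-!
If `f (e n) ≠ 0`, multiplicativity and orthogonality give `f x • e n = x * e n` for every `x`,
since right multiplication by `e n` is continuous and kills all terms of the expansion of `x`
but the `n`-th. Hence `ker f` is the preimage of `0` under the continuous map `x ↦ x * e n`,
so it is closed and `f` is continuous.
-/

theorem continuous_mul_right_of_withSeminorms {𝕜 A : Type*} [NormedField 𝕜] [Ring A]
    [Algebra 𝕜 A] [TopologicalSpace A] {p : ℕ → Seminorm 𝕜 A} (hp : WithSeminorms p)
    (hsub : ∀ i x y, p i (x * y) ≤ p (i + 1) x * p (i + 1) y) (a : A) :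
    Continuous fun x : A => x * a := by
  refine WithSeminorms.continuous_of_isBounded hp hp (LinearMap.mulRight 𝕜 a)
    fun i => ⟨{i + 1}, ⟨p (i + 1) a, apply_nonneg _ _⟩, fun x => ?_⟩
  rw [Finset.sup_singleton]
  change p i (x * a) ≤ p (i + 1) a * p (i + 1) x
  exact mul_comm (p (i + 1) x) _ ▸ hsub i x a

theorem sum_smul_mul_eq_of_orthogonal {R A : Type*} [Semiring R] [Semiring A] [Module R A]
    [IsScalarTower R A A] {e : ℕ → A} (horth : ∀ i j, e i * e j = if i = j then e i else 0)
    (a : ℕ → R) {n N : ℕ} (hn : n < N) :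
    (∑ m ∈ Finset.range N, a m • e m) * e n = a n • e n := by
  simp_rw [Finset.sum_mul, smul_mul_assoc, horth, smul_ite, smul_zero]
  rw [Finset.sum_ite_eq' (Finset.range N) n, if_pos (Finset.mem_range.mpr hn)]

theorem HasExpansion.mul_eq_smul {A : Type*} [Ring A] [Algebra ℂ A] [TopologicalSpace A]
    [T2Space A] {e : ℕ → A} (horth : ∀ i j, e i * e j = if i = j then e i else 0)
    {a : ℕ → ℂ} {x : A} (hx : HasExpansion a e x) (n : ℕ)
    (hcont : Continuous fun y : A => y * e n) :
    x * e n = a n • e n := by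
  have hlim : Tendsto (fun N => (∑ m ∈ Finset.range N, a m • e m) * e n) atTop (𝓝 (x * e n)) :=
    (hcont.tendsto x).comp hx
  refine tendsto_nhds_unique hlim (tendsto_const_nhds.congr' ?_)
  filter_upwards [eventually_gt_atTop n] with N hN
  exact (sum_smul_mul_eq_of_orthogonal horth a hN).symm

theorem LinearMap.continuous_of_continuous_smul_right {𝕜 E : Type*}
    [NontriviallyNormedField 𝕜] [AddCommGroup E] [Module 𝕜 E] [TopologicalSpace E]
    [IsTopologicalAddGroup E] [ContinuousSMul 𝕜 E] [T1Space E] (l : E →ₗ[𝕜] 𝕜) {v : E}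
    (hv : v ≠ 0) (hcont : Continuous fun x => l x • v) : Continuous l := by
  refine l.continuous_of_isClosed_ker ?_
  have hker : (LinearMap.ker l : Set E) = (fun x => l x • v) ⁻¹' {0} := by
    ext x
    simp [hv]
  exact hker ▸ isClosed_singleton.preimage hcont

theorem stmt15_general {A : Type*} [Ring A] [Algebra ℂ A] [UniformSpace A] [T2Space A]
    (p : ℕ → Seminorm ℂ A) (hp : WithSeminorms p)
    (hsub : ∀ i x y, p i (x * y) ≤ p (i + 1) x * p (i + 1) y)
    (e : ℕ → A) (coef : A → ℕ → ℂ)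
    (horth : ∀ i j, e i * e j = if i = j then e i else 0)
    (hbasis : ∀ x, HasExpansion (coef x) e x)
    (f : A → ℂ) (hf : IsLinearMap ℂ f) (hfm : ∀ x y, f (x * y) = f x * f y)
    (hnc : ¬ Continuous f) :
    ∀ n, f (e n) = 0 := by
  intro n
  by_contra hne
  have := hp.topologicalAddGroup
  have := hp.continuousSMul
  let l := IsLinearMap.mk' f hf
  have hen : e n ≠ 0 := fun h0 => hne (h0 ▸ l.map_zero)
  have hcont := continuous_mul_right_of_withSeminorms hp hsub (e n)
  have hsmul : ∀ x, f x • e n = x * e n := fun x => by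
    have hmul : coef x n * f (e n) = f x * f (e n) := by
      rw [← hfm, (hbasis x).mul_eq_smul horth n hcont, hf.map_smul, smul_eq_mul]
    rw [← mul_left_inj' hne |>.mp hmul, (hbasis x).mul_eq_smul horth n hcont]
  exact hnc (l.continuous_of_continuous_smul_right hen (by simpa [l, hsmul] using hcont))

/-- A discontinuous multiplicative linear functional vanishes on all basis vectors. -/
theorem stmt15 {A : Type*} [Ring A] [Algebra ℂ A] [UniformSpace A] [T2Space A]
    [IsUniformAddGroup A] [ContinuousSMul ℂ A] [CompleteSpace A]
    (p : ℕ → Seminorm ℂ A) (hp : WithSeminorms p)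
    (hmono : ∀ i x, p i x ≤ p (i + 1) x)
    (hsub : ∀ i x y, p i (x * y) ≤ p (i + 1) x * p (i + 1) y)
    (e : ℕ → A) (coef : A → ℕ → ℂ)
    (horth : ∀ i j, e i * e j = if i = j then e i else 0)
    (hbasis : ∀ x, HasExpansion (coef x) e x)
    (huniq : ∀ x a, HasExpansion a e x → a = coef x)
    (f : A → ℂ) (hf : IsLinearMap ℂ f) (hfm : ∀ x y, f (x * y) = f x * f y)
    (hnc : ¬ Continuous f) :
    ∀ n, f (e n) = 0 :=
  stmt15_general p hp hsub e coef horth hbasis f hf hfm hnc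
end

section
/- Let (A, (‖·‖_i)) be a unital B_0-algebra with orthogonal basis (e_n) and suppose some element x = Σ t_n e_n has unbounded coefficient sequence (t_n). Then there is a subsequence (e_{k_n}) such that the series Σ_{n=1}^∞ e_{k_n} is absolutely convergent (with respect to each seminorm) and moreover Σ_{n=1}^∞ n^{1/2} e_{k_n} converges in A. -/
open Filter Topology

lemma frequently_le_of_not_bddAbove_range {β : Type*} [LinearOrder β] {u : ℕ → β}
    (hu : ¬BddAbove (Set.range u)) (b : β) : ∃ᶠ n in atTop, b ≤ u n := by
  refine fun hlt => hu (IsBoundedUnder.bddAbove_range ?_)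
  exact isBoundedUnder_of_eventually_le (hlt.mono fun _ h => (not_le.mp h).le)

lemma exists_strictMono_forall_le_of_not_bddAbove_range {β : Type*} [LinearOrder β]
    {u : ℕ → β} (hu : ¬BddAbove (Set.range u)) (c : ℕ → β) :
    ∃ k : ℕ → ℕ, StrictMono k ∧ ∀ n, c n ≤ u (k n) :=
  extraction_forall_of_frequently fun n => frequently_le_of_not_bddAbove_range hu (c n)

lemma HasExpansion.tendsto_smul_zero_s17 {A : Type*} [AddCommGroup A] [Module ℂ A]
    [TopologicalSpace A] [IsTopologicalAddGroup A] {a : ℕ → ℂ} {e : ℕ → A} {x : A}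
    (h : HasExpansion a e x) : Tendsto (fun n => a n • e n) atTop (𝓝 0) := by
  have hdiff := (h.comp (tendsto_add_atTop_nat 1)).sub h
  rw [sub_self] at hdiff
  simpa [Function.comp_def, Finset.sum_range_succ] using hdiff

lemma WithSeminorms.summable_of_summable_seminorm_s17 {𝕜 E ι : Type*} [NormedField 𝕜]
    [AddCommGroup E] [Module 𝕜 E] [UniformSpace E] [IsUniformAddGroup E] [CompleteSpace E]
    {p : SeminormFamily 𝕜 E ι} (hp : WithSeminorms p) {f : ℕ → E}
    (hf : ∀ i, Summable fun n => p i (f n)) : Summable f := by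
  classical
  refine summable_iff_vanishing.mpr fun U hU => ?_
  obtain ⟨⟨s, r⟩, hr, hUsub⟩ := hp.hasBasis_zero_ball.mem_iff.mp hU
  obtain ⟨t₀, ht₀⟩ := summable_iff_vanishing.mp (summable_sum fun i (_ : i ∈ s) => hf i)
    (Metric.ball 0 r) (Metric.ball_mem_nhds 0 hr)
  refine ⟨t₀, fun t ht => hUsub ?_⟩
  rw [Seminorm.mem_ball_zero]
  calc (s.sup p) (∑ n ∈ t, f n) ≤ ∑ i ∈ s, p i (∑ n ∈ t, f n) :=
        (Seminorm.finset_sup_le_sum p s _).trans_eq (sum_apply _ _ _)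
    _ ≤ ∑ n ∈ t, ∑ i ∈ s, p i (f n) := by
        rw [Finset.sum_comm]
        exact Finset.sum_le_sum fun i _ =>
          Finset.le_sum_of_subadditive (p i) (map_zero _).le (map_add_le_add _) t f
    _ ≤ ‖∑ n ∈ t, ∑ i ∈ s, p i (f n)‖ := Real.le_norm_self _
    _ < r := mem_ball_zero_iff.mp (ht₀ t ht)

lemma summable_one_div_nat_add_one_sq : Summable fun n : ℕ => 1 / ((n : ℝ) + 1) ^ 2 := by
  simpa using (summable_nat_add_iff 1).mpr (Real.summable_one_div_nat_pow.mpr one_lt_two)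

lemma Seminorm.summable_sqrt_smul_of_cube_le_norm {E : Type*} [AddCommGroup E] [Module ℂ E]
    (q : Seminorm ℂ E) {a : ℕ → ℂ} {v : ℕ → E} {M : ℝ} (hM : ∀ n, ‖a n‖ * q (v n) ≤ M)
    (ha : ∀ n : ℕ, ((n : ℝ) + 1) ^ 3 ≤ ‖a n‖) :
    Summable fun n : ℕ => q (((Real.sqrt (n + 1) : ℝ) : ℂ) • v n) := by
  have hv : ∀ n : ℕ, q (v n) ≤ M / ((n : ℝ) + 1) ^ 3 := fun n => by
    rw [le_div_iff₀ (by positivity), mul_comm]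
    exact (mul_le_mul_of_nonneg_right (ha n) (apply_nonneg _ _)).trans (hM n)
  refine (summable_one_div_nat_add_one_sq.mul_left M).of_nonneg_of_le
    (fun _ => apply_nonneg _ _) fun n => ?_
  rw [map_smul_eq_mul, Complex.norm_real, Real.norm_of_nonneg (Real.sqrt_nonneg _)]
  calc Real.sqrt (n + 1) * q (v n) ≤ ((n : ℝ) + 1) * (M / ((n : ℝ) + 1) ^ 3) :=
        mul_le_mul (Real.sqrt_le_self_iff.mpr (.inr (by simp))) (hv n) (apply_nonneg _ _)
          (by positivity)
    _ = M * (1 / ((n : ℝ) + 1) ^ 2) := by field_simp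

theorem stmt17_general {A : Type*} [Ring A] [Algebra ℂ A] [UniformSpace A]
    [IsUniformAddGroup A] [CompleteSpace A]
    (p : ℕ → Seminorm ℂ A) (hp : WithSeminorms p)
    (e : ℕ → A) (coef : A → ℕ → ℂ)
    (hbasis : ∀ x, HasExpansion (coef x) e x)
    (x : A) (hub : ¬ ∃ M : ℝ, ∀ n, ‖coef x n‖ ≤ M) :
    ∃ k : ℕ → ℕ, StrictMono k ∧ (∀ i, Summable fun n => p i (e (k n))) ∧
      ∃ y : A,
        Tendsto (fun N => ∑ n ∈ Finset.range N,
          ((Real.sqrt (n + 1) : ℝ) : ℂ) • e (k n)) atTop (𝓝 y) := by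
  obtain ⟨k, hk, hcoef⟩ := exists_strictMono_forall_le_of_not_bddAbove_range
    (u := fun n => ‖coef x n‖) (by simpa [BddAbove, upperBounds, Set.Nonempty] using hub)
    fun n => ((n : ℝ) + 1) ^ 3
  have hterms_bdd : ∀ i, ∃ M, ∀ n, ‖coef x n‖ * p i (e n) ≤ M := fun i => by
    obtain ⟨M, hM⟩ := (((hp.continuous_seminorm i).tendsto 0).comp
      (hbasis x).tendsto_smul_zero_s17).bddAbove_range
    exact ⟨M, fun n => by simpa [map_smul_eq_mul] using hM ⟨n, rfl⟩⟩
  have hsqrt : ∀ i, Summable fun n : ℕ => p i (((Real.sqrt (n + 1) : ℝ) : ℂ) • e (k n)) :=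
    fun i => by
      obtain ⟨M, hM⟩ := hterms_bdd i
      exact (p i).summable_sqrt_smul_of_cube_le_norm (fun n => hM (k n)) hcoef
  refine ⟨k, hk, fun i => (hsqrt i).of_nonneg_of_le (fun _ => apply_nonneg _ _) fun n => ?_,
    _, (hp.summable_of_summable_seminorm_s17 hsqrt).hasSum.tendsto_sum_nat⟩
  rw [map_smul_eq_mul, Complex.norm_real, Real.norm_of_nonneg (Real.sqrt_nonneg _)]
  exact le_mul_of_one_le_left (apply_nonneg _ _) (Real.one_le_sqrt.mpr (by simp))

/-- From an element with unbounded coefficients one extracts a subsequence with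
Σ e_{kₙ} absolutely convergent and Σ n^{1/2} e_{kₙ} convergent. -/
theorem stmt17 {A : Type*} [Ring A] [Algebra ℂ A] [UniformSpace A] [T2Space A]
    [IsUniformAddGroup A] [ContinuousSMul ℂ A] [CompleteSpace A]
    (p : ℕ → Seminorm ℂ A) (hp : WithSeminorms p)
    (hmono : ∀ i x, p i x ≤ p (i + 1) x)
    (hsub : ∀ i x y, p i (x * y) ≤ p (i + 1) x * p (i + 1) y)
    (e : ℕ → A) (coef : A → ℕ → ℂ)
    (horth : ∀ i j, e i * e j = if i = j then e i else 0)
    (hbasis : ∀ x, HasExpansion (coef x) e x)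
    (huniq : ∀ x a, HasExpansion a e x → a = coef x)
    (x : A) (hub : ¬ ∃ M : ℝ, ∀ n, ‖coef x n‖ ≤ M) :
    ∃ k : ℕ → ℕ, StrictMono k ∧ (∀ i, Summable fun n => p i (e (k n))) ∧
      ∃ y : A,
        Tendsto (fun N => ∑ n ∈ Finset.range N,
          ((Real.sqrt (n + 1) : ℝ) : ℂ) • e (k n)) atTop (𝓝 y) :=
  stmt17_general p hp e coef hbasis x hub
end
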